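/- If G and H are non-trivial connected graphs with γ_r2(H) = 3, then 2γ(G) ≤ γ_r2(G ∘ H) ≤ min{ 2|A| + 3|B| : (A,B) is a dominating couple of G }. -/

import Mathlib

open Finset

def SimpleGraph.lexProd {α β : Type*} (G : SimpleGraph α) (H : SimpleGraph β) :
    SimpleGraph (α × β) where
  Adj x y := G.Adj x.1 y.1 ∨ (x.1 = y.1 ∧ H.Adj x.2 y.2)
  symm := by
    constructor
    intro x y h
    rcases h with h | ⟨e, h⟩
    · exact Or.inl h.symm
    · exact Or.inr ⟨e.symm, h.symm⟩
  loopless := by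
    constructor
    intro x h
    rcases h with h | ⟨_, h⟩
    · exact G.irrefl h
    · exact H.irrefl h

/-- `f` is a `k`-rainbow dominating function of `G`. -/
def IsRDF {α : Type*} (G : SimpleGraph α) (k : ℕ) (f : α → Finset (Fin k)) : Prop :=
  ∀ v, f v = ∅ → ∀ i : Fin k, ∃ u, G.Adj u v ∧ i ∈ f u

/-- weight of a labeling -/
def rdWeight {α : Type*} [Fintype α] {k : ℕ} (f : α → Finset (Fin k)) : ℕ :=
  ∑ v, (f v).card

/-- the `k`-rainbow domination number -/
noncomputable def rdNum {α : Type*} (G : SimpleGraph α) [Fintype α] (k : ℕ) : ℕ :=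
  sInf {n | ∃ f : α → Finset (Fin k), IsRDF G k f ∧ rdWeight f = n}

/-- `D` is a dominating set of `G` -/
def IsDom {α : Type*} (G : SimpleGraph α) (D : Set α) : Prop :=
  ∀ v, v ∈ D ∨ ∃ u ∈ D, G.Adj u v

/-- `D` is a total dominating set of `G` -/
def IsTotalDom {α : Type*} (G : SimpleGraph α) (D : Set α) : Prop :=
  ∀ v, ∃ u ∈ D, G.Adj u v

/-- the domination number -/
noncomputable def domNum {α : Type*} (G : SimpleGraph α) [Fintype α] : ℕ :=
  sInf {n | ∃ D : Finset α, IsDom G ↑D ∧ D.card = n}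

/-- the total domination number -/
noncomputable def totalDomNum {α : Type*} (G : SimpleGraph α) [Fintype α] : ℕ :=
  sInf {n | ∃ D : Finset α, IsTotalDom G ↑D ∧ D.card = n}

/-- `(A, B)` is a dominating couple of `G` -/
def IsDomCouple {α : Type*} [DecidableEq α] (G : SimpleGraph α) (A B : Finset α) : Prop :=
  Disjoint A B ∧ ∀ x, x ∉ B → ∃ w ∈ A ∪ B, G.Adj w x

/-!
For an RDF `f` of `G ∘ H` and a colour `c`, the vertices of `G` whose fibre has weight at least
`k` or contains `c` dominate `G`: a light fibre contains an unlabelled vertex, and its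
`c`-coloured neighbour cannot lie in the same fibre. A vertex lies in at most as many of these
`k` dominating sets as the weight of its fibre, whence `k γ(G) ≤ w(f)`.

Conversely, a dominating couple `(A, B)` yields an RDF of `G ∘ H` by putting all colours on one
vertex of each `A`-fibre and an RDF of `H` using every colour on each `B`-fibre. When `γ_r2(H)`
is attained by an RDF missing a colour, moving both colours to one end of an edge and emptying
the other end gives one of no larger weight using both colours.
-/

section Domination

variable {α : Type*} [Fintype α] {G : SimpleGraph α}

theorem domNum_le_card {D : Finset α} (hD : IsDom G ↑D) : domNum G ≤ D.card :=
  Nat.sInf_le ⟨D, hD, rfl⟩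

theorem rdNum_le_rdWeight {k : ℕ} {f : α → Finset (Fin k)} (hf : IsRDF G k f) :
    rdNum G k ≤ rdWeight f :=
  Nat.sInf_le ⟨f, hf, rfl⟩

theorem exists_isRDF_rdWeight_eq_rdNum (G : SimpleGraph α) (k : ℕ) :
    ∃ f : α → Finset (Fin k), IsRDF G k f ∧ rdWeight f = rdNum G k :=
  Nat.sInf_mem (s := {n | ∃ f : α → Finset (Fin k), IsRDF G k f ∧ rdWeight f = n})
    ⟨_, fun _ => univ, fun _ hv i => absurd (hv ▸ mem_univ i) (notMem_empty i), rfl⟩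

end Domination

section Lower

variable {α β : Type*} [Fintype α] [Fintype β] {G : SimpleGraph α} {H : SimpleGraph β}
  {k : ℕ} {f : α × β → Finset (Fin k)}

theorem isDom_of_isRDF_lexProd (hk : k ≤ Fintype.card β) (hf : IsRDF (G.lexProd H) k f)
    (c : Fin k) :
    IsDom G ↑(univ.filter fun x => k ≤ ∑ h, (f (x, h)).card ∨ ∃ h, c ∈ f (x, h)) := by
  intro x
  by_cases hx : k ≤ ∑ h, (f (x, h)).card ∨ ∃ h, c ∈ f (x, h)
  · exact Or.inl (by simpa using hx)
  push Not at hx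
  obtain ⟨hlight, hc⟩ := hx
  obtain ⟨h, hempty⟩ : ∃ h, f (x, h) = ∅ := by
    by_contra! hne
    have : Fintype.card β ≤ ∑ h, (f (x, h)).card := by
      simpa using card_nsmul_le_sum univ (fun h => (f (x, h)).card) 1
        fun h _ => card_pos.2 (hne h)
    omega
  obtain ⟨⟨y, h'⟩, hadj | ⟨rfl, -⟩, hcy⟩ := hf (x, h) hempty c
  · exact Or.inr ⟨y, by simpa using Or.inr ⟨h', hcy⟩, hadj⟩
  · exact absurd hcy (hc h')

theorem mul_domNum_le_rdWeight_of_isRDF_lexProd (hk : k ≤ Fintype.card β)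
    (hf : IsRDF (G.lexProd H) k f) : k * domNum G ≤ rdWeight f := by
  have hfibre (x : α) :
      #{c | k ≤ ∑ h, (f (x, h)).card ∨ ∃ h, c ∈ f (x, h)} ≤ ∑ h, (f (x, h)).card := by
    by_cases hheavy : k ≤ ∑ h, (f (x, h)).card
    · exact (card_filter_le _ _).trans (by simpa using hheavy)
    · calc #{c | k ≤ ∑ h, (f (x, h)).card ∨ ∃ h, c ∈ f (x, h)}
            = #(univ.biUnion fun h => f (x, h)) := by congr 1; ext c; simp [hheavy]
        _ ≤ ∑ h, (f (x, h)).card := card_biUnion_le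
  calc k * domNum G = ∑ _c : Fin k, domNum G := by simp
    _ ≤ ∑ c, #{x | k ≤ ∑ h, (f (x, h)).card ∨ ∃ h, c ∈ f (x, h)} :=
        sum_le_sum fun c _ => domNum_le_card (isDom_of_isRDF_lexProd hk hf c)
    _ = ∑ x, #{c | k ≤ ∑ h, (f (x, h)).card ∨ ∃ h, c ∈ f (x, h)} := by
        simp only [card_eq_sum_ones, sum_filter]
        exact sum_comm
    _ ≤ ∑ x, ∑ h, (f (x, h)).card := sum_le_sum fun x _ => hfibre x
    _ = rdWeight f := (Fintype.sum_prod_type fun p => (f p).card).symm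

theorem mul_domNum_le_rdNum_lexProd (G : SimpleGraph α) (H : SimpleGraph β)
    (hk : k ≤ Fintype.card β) : k * domNum G ≤ rdNum (G.lexProd H) k := by
  obtain ⟨f, hf, hw⟩ := exists_isRDF_rdWeight_eq_rdNum (G.lexProd H) k
  exact hw ▸ mul_domNum_le_rdWeight_of_isRDF_lexProd hk hf

end Lower

section Upper

variable {α β : Type*} [DecidableEq α] {G : SimpleGraph α} {H : SimpleGraph β} {k : ℕ}

def coupleLabel [DecidableEq β] (A B : Finset α) (g : β → Finset (Fin k)) (b : β) :
    α × β → Finset (Fin k) :=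
  fun p => if p.1 ∈ A then (if p.2 = b then univ else ∅) else if p.1 ∈ B then g p.2 else ∅

theorem isRDF_coupleLabel [DecidableEq β] {A B : Finset α} (hAB : IsDomCouple G A B)
    {g : β → Finset (Fin k)} (hg : IsRDF H k g) (hcol : ∀ i, ∃ v, i ∈ g v) (b : β) :
    IsRDF (G.lexProd H) k (coupleLabel A B g b) := by
  rintro ⟨x, h⟩ hempty i
  by_cases hxB : x ∈ B
  · have hxA : x ∉ A := disjoint_right.mp hAB.1 hxB
    obtain ⟨u, hu, hiu⟩ := hg h (by simpa [coupleLabel, hxA, hxB] using hempty) i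
    exact ⟨(x, u), Or.inr ⟨rfl, hu⟩, by simpa [coupleLabel, hxA, hxB] using hiu⟩
  · obtain ⟨w, hw, hadj⟩ := hAB.2 x hxB
    by_cases hwA : w ∈ A
    · exact ⟨(w, b), Or.inl hadj, by simp [coupleLabel, hwA]⟩
    · obtain ⟨v, hv⟩ := hcol i
      have hwB : w ∈ B := by simpa [hwA] using hw
      exact ⟨(w, v), Or.inl hadj, by simpa [coupleLabel, hwA, hwB] using hv⟩

theorem rdWeight_coupleLabel [Fintype α] [Fintype β] [DecidableEq β] {A B : Finset α}
    (hAB : Disjoint A B) (g : β → Finset (Fin k)) (b : β) :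
    rdWeight (coupleLabel A B g b) = k * #A + rdWeight g * #B := by
  have hfibre (x : α) : ∑ h, (coupleLabel A B g b (x, h)).card =
      (if x ∈ A then k else 0) + (if x ∈ B then rdWeight g else 0) := by
    by_cases hxA : x ∈ A
    · simp [coupleLabel, hxA, disjoint_left.mp hAB hxA, apply_ite]
    · by_cases hxB : x ∈ B <;> simp [coupleLabel, hxA, hxB, rdWeight]
  rw [rdWeight, Fintype.sum_prod_type, Fintype.sum_congr _ _ hfibre, sum_add_distrib]
  simp [sum_ite_mem, mul_comm]

theorem rdNum_lexProd_le [Fintype α] [Fintype β] [Nonempty β] {A B : Finset α}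
    (hAB : IsDomCouple G A B) {g : β → Finset (Fin k)} (hg : IsRDF H k g)
    (hcol : ∀ i, ∃ v, i ∈ g v) : rdNum (G.lexProd H) k ≤ k * #A + rdWeight g * #B := by
  classical
  inhabit β
  rw [← rdWeight_coupleLabel hAB.1 g default]
  exact rdNum_le_rdWeight (isRDF_coupleLabel hAB hg hcol default)

end Upper

section Colours

variable {β : Type*} [Fintype β] [DecidableEq β] {H : SimpleGraph β}

theorem IsRDF.exists_rdWeight_le_forall_exists_mem {g : β → Finset (Fin 2)} (hg : IsRDF H 2 g)
    {u x : β} (hux : H.Adj u x) :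
    ∃ g' : β → Finset (Fin 2),
      IsRDF H 2 g' ∧ rdWeight g' ≤ rdWeight g ∧ ∀ i, ∃ v, i ∈ g' v := by
  by_cases hcol : ∀ i, ∃ v, i ∈ g v
  · exact ⟨g, hg, le_rfl, hcol⟩
  push Not at hcol
  obtain ⟨i, hi⟩ := hcol
  have hne (v : β) : (g v).Nonempty := by
    by_contra! hv
    obtain ⟨w, -, hiw⟩ := hg v hv i
    exact hi w hiw
  have hxu : x ≠ u := hux.ne.symm
  set g' : β → Finset (Fin 2) := fun z => if z = u then univ else if z = x then ∅ else g z
  refine ⟨g', ?_, ?_, fun j => ⟨u, by simp [g']⟩⟩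
  · intro z hz j
    by_cases hzu : z = u
    · exact absurd (by simpa [g', hzu] using hz) univ_nonempty.ne_empty
    by_cases hzx : z = x
    · exact ⟨u, hzx ▸ hux, by simp [g']⟩
    · exact absurd (by simpa [g', hzu, hzx] using hz) (hne z).ne_empty
  · have hpoint (z : β) :
        (g' z).card + (if z = x then 1 else 0) ≤ (g z).card + (if z = u then 1 else 0) := by
      by_cases hzu : z = u
      · simpa [g', hzu, hxu.symm] using hne u
      by_cases hzx : z = x
      · simpa [g', hzx, hxu] using hne x
      · simp [g', hzu, hzx]
    have := sum_le_sum fun z (_ : z ∈ univ) => hpoint z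
    simp only [sum_add_distrib, sum_ite_eq', mem_univ, if_true] at this
    exact Nat.le_of_add_le_add_right this

end Colours

theorem stmt13 {α β : Type*} [Fintype α] [Fintype β] [DecidableEq α]
    (G : SimpleGraph α) (H : SimpleGraph β)
    (hGc : G.Connected) (hHc : H.Connected) (hG : Nontrivial α) (hH : Nontrivial β)
    (hr : rdNum H 2 = 3) :
    2 * domNum G ≤ rdNum (G.lexProd H) 2 ∧
      rdNum (G.lexProd H) 2 ≤
        sInf {n | ∃ A B : Finset α, IsDomCouple G A B ∧ n = 2 * A.card + 3 * B.card} := by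
  classical
  refine ⟨mul_domNum_le_rdNum_lexProd G H Fintype.one_lt_card, ?_⟩
  obtain ⟨g₀, hg₀, hw₀⟩ := exists_isRDF_rdWeight_eq_rdNum H 2
  obtain ⟨u, hu⟩ := hHc.preconnected.exists_adj_of_nontrivial (Classical.arbitrary β)
  obtain ⟨g, hg, hw, hcol⟩ := hg₀.exists_rdWeight_le_forall_exists_mem hu
  have hcouple : IsDomCouple G univ ∅ := ⟨disjoint_empty_right _, fun x _ =>
    (hGc.preconnected.exists_adj_of_nontrivial x).imp fun w hw => ⟨by simp, hw.symm⟩⟩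
  refine le_csInf ⟨_, univ, ∅, hcouple, rfl⟩ ?_
  rintro _ ⟨A, B, hAB, rfl⟩
  calc rdNum (G.lexProd H) 2 ≤ 2 * #A + rdWeight g * #B := rdNum_lexProd_le hAB hg hcol
    _ ≤ 2 * #A + 3 * #B := by gcongr; omega
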